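/- Let W_2 ∈ ℝ^{d_y×d_1} and W_1 ∈ ℝ^{d_1×d_x} satisfy the balancedness condition W_2ᵀW_2 = W_1W_1ᵀ, and set p := min(d_x, d_1, d_y). Then ‖W_2‖_F² ≤ √p · ‖W_2W_1‖_F. -/

import Mathlib

/-! The balancedness condition makes `A := W₂ᵀW₂ = W₁W₁ᵀ` a symmetric matrix with
`‖W₂‖_F² = tr A` and `‖W₂W₁‖_F² = tr (W₁ᵀ A W₁) = tr A²`. Its rank is at most `p`, since `A` has
the rank of both `W₂` and `W₁`. By Cauchy–Schwarz over the nonzero eigenvalues of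
`A`, `(tr A)² ≤ rank A · tr A²`, and taking square roots gives the claim. -/

open Matrix

noncomputable section

/-- Squared Frobenius norm ‖M‖_F² of a real matrix. -/
def frobSq {m n : ℕ} (M : Matrix (Fin m) (Fin n) ℝ) : ℝ := ∑ i, ∑ j, (M i j) ^ 2

/-- Frobenius norm ‖M‖_F of a real matrix. -/
def frobNorm {m n : ℕ} (M : Matrix (Fin m) (Fin n) ℝ) : ℝ := Real.sqrt (frobSq M)

theorem sq_sum_le_card_ne_zero_mul_sum_sq {ι : Type*} [Fintype ι] (f : ι → ℝ) :
    (∑ i, f i) ^ 2 ≤ Fintype.card {i // f i ≠ 0} * ∑ i, f i ^ 2 := by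
  classical
  rw [Fintype.card_subtype, ← Finset.sum_filter_ne_zero]
  calc (∑ i ∈ Finset.univ.filter (f · ≠ 0), f i) ^ 2
      ≤ (Finset.univ.filter (f · ≠ 0)).card * ∑ i ∈ Finset.univ.filter (f · ≠ 0), f i ^ 2 :=
        sq_sum_le_card_mul_sum_sq
    _ ≤ (Finset.univ.filter (f · ≠ 0)).card * ∑ i, f i ^ 2 :=
        mul_le_mul_of_nonneg_left (Finset.sum_le_sum_of_subset_of_nonneg (Finset.subset_univ _)
          fun i _ _ => sq_nonneg (f i)) (Nat.cast_nonneg _)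

namespace Matrix

theorem rank_transpose_mul_self_le_of_balanced {m k n : Type*} [Fintype m] [Fintype k] [Fintype n]
    {W₂ : Matrix m k ℝ} {W₁ : Matrix k n ℝ} (hbal : W₂ᵀ * W₂ = W₁ * W₁ᵀ) :
    (W₂ᵀ * W₂).rank ≤ min (Fintype.card n) (min (Fintype.card k) (Fintype.card m)) := by
  have h₂ : (W₂ᵀ * W₂).rank = W₂.rank := rank_transpose_mul_self W₂
  have h₁ : (W₂ᵀ * W₂).rank = W₁.rank := by rw [hbal]; exact rank_self_mul_transpose W₁
  exact le_min (h₁ ▸ rank_le_card_width W₁)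
    (le_min (h₂ ▸ rank_le_card_width W₂) (h₂ ▸ rank_le_card_height W₂))

variable {n 𝕜 : Type*} [Fintype n] [DecidableEq n] [RCLike 𝕜]

theorem trace_conjStarAlgAut {R : Type*} [CommRing R] [StarRing R]
    (U : unitary (Matrix n n R)) (M : Matrix n n R) :
    (Unitary.conjStarAlgAut R _ U M).trace = M.trace := by
  rw [Unitary.conjStarAlgAut_apply, trace_mul_cycle, Unitary.star_mul_self_of_mem U.2, one_mul]

theorem IsHermitian.trace_mul_self_eq_sum_sq_eigenvalues {A : Matrix n n 𝕜} (hA : A.IsHermitian) :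
    (A * A).trace = ∑ i, (hA.eigenvalues i : 𝕜) ^ 2 := by
  conv_lhs => rw [hA.spectral_theorem]
  rw [← map_mul, trace_conjStarAlgAut, diagonal_mul_diagonal, trace_diagonal]
  simp [sq]

theorem IsHermitian.trace_sq_le_rank_mul_trace_mul_self {A : Matrix n n ℝ} (hA : A.IsHermitian) :
    A.trace ^ 2 ≤ A.rank * (A * A).trace := by
  rw [hA.trace_eq_sum_eigenvalues, hA.trace_mul_self_eq_sum_sq_eigenvalues,
    hA.rank_eq_card_non_zero_eigs]
  exact sq_sum_le_card_ne_zero_mul_sum_sq hA.eigenvalues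

end Matrix

theorem frobSq_eq_trace {m n : ℕ} (M : Matrix (Fin m) (Fin n) ℝ) :
    frobSq M = (Mᵀ * M).trace := by
  simp only [frobSq, trace, diag, mul_apply, transpose_apply, sq]
  exact Finset.sum_comm

theorem frobSq_nonneg {m n : ℕ} (M : Matrix (Fin m) (Fin n) ℝ) : 0 ≤ frobSq M := by
  unfold frobSq; positivity

theorem frobSq_mul_eq_trace_sq_of_balanced {dx d1 dy : ℕ}
    {W2 : Matrix (Fin dy) (Fin d1) ℝ} {W1 : Matrix (Fin d1) (Fin dx) ℝ}
    (hbal : W2ᵀ * W2 = W1 * W1ᵀ) :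
    frobSq (W2 * W1) = (W2ᵀ * W2 * (W2ᵀ * W2)).trace := by
  calc frobSq (W2 * W1) = (W1ᵀ * (W2ᵀ * W2) * W1).trace := by
        rw [frobSq_eq_trace, transpose_mul]; simp only [Matrix.mul_assoc]
    _ = (W2ᵀ * W2 * (W1 * W1ᵀ)).trace := by
        rw [trace_mul_cycle, trace_mul_comm]
    _ = (W2ᵀ * W2 * (W2ᵀ * W2)).trace := by rw [hbal]

/-- under the balancedness condition `W₂ᵀW₂ = W₁W₁ᵀ`, with
`p = min(d_x, d_1, d_y)`, one has `‖W₂‖_F² ≤ √p · ‖W₂W₁‖_F`. -/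
theorem stmt6
    (dx d1 dy : ℕ)
    (W2 : Matrix (Fin dy) (Fin d1) ℝ) (W1 : Matrix (Fin d1) (Fin dx) ℝ)
    (hbal : W2ᵀ * W2 = W1 * W1ᵀ) :
    frobNorm W2 ^ 2 ≤ Real.sqrt (min dx (min d1 dy)) * frobNorm (W2 * W1) := by
  set p : ℝ := min dx (min d1 dy)
  have hA : (W2ᵀ * W2).IsHermitian := by simpa using isHermitian_conjTranspose_mul_self W2
  have hrank : ((W2ᵀ * W2).rank : ℝ) ≤ p := by
    have := rank_transpose_mul_self_le_of_balanced hbal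
    simp only [Fintype.card_fin] at this
    simp only [p]
    exact_mod_cast this
  have hsq : frobSq W2 ^ 2 ≤ p * frobSq (W2 * W1) := by
    rw [frobSq_eq_trace, frobSq_mul_eq_trace_sq_of_balanced hbal]
    refine hA.trace_sq_le_rank_mul_trace_mul_self.trans ?_
    rw [← frobSq_mul_eq_trace_sq_of_balanced hbal]
    gcongr
    exact frobSq_nonneg _
  calc frobNorm W2 ^ 2 = frobSq W2 := Real.sq_sqrt (frobSq_nonneg W2)
    _ ≤ Real.sqrt (p * frobSq (W2 * W1)) := Real.le_sqrt_of_sq_le hsq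
    _ = Real.sqrt p * frobNorm (W2 * W1) := Real.sqrt_mul (by positivity) _
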